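/- arXiv:1704.05259 — 4 statements merged into one kernel-verified Lean document; each statement's English description precedes it below -/
import Mathlib

section
/- Let S be the t×(t+1) Hankel matrix with entries s_{i+j} where s_j = Σ_{k=1}^l c_k η_k^j, the η_k are distinct, the c_k are nonzero, and l ≤ t. Then the rank of S equals l. -/
/-- The `t×(t+1)` Hankel matrix `S` with entries `s_{i+j}`, where
`s_j = Σ_k c_k η_k^j` with distinct `η_k` and nonzero `c_k`, `l ≤ t`, has rank `l`. -/
theorem stmt_11 {F : Type*} [Field F] (l t : ℕ) (hlt : l ≤ t)
    (η c : Fin l → F) (hη0 : ∀ k, η k ≠ 0) (hηinj : Function.Injective η)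
    (hc : ∀ k, c k ≠ 0)
    (s : ℕ → F) (hs : ∀ j, s j = ∑ k, c k * η k ^ j) :
    (Matrix.of fun (i : Fin t) (j : Fin (t + 1)) => s ((i : ℕ) + (j : ℕ))).rank = l := by
  classical
  have hlt1 : l ≤ t + 1 := Nat.le_succ_of_le hlt
  set S : Matrix (Fin t) (Fin (t + 1)) F :=
    Matrix.of fun (i : Fin t) (j : Fin (t + 1)) => s ((i : ℕ) + (j : ℕ)) with hSdef
  -- upper bound: S = A * B with B having l rows
  set A : Matrix (Fin t) (Fin l) F := Matrix.of fun i k => c k * η k ^ (i : ℕ) with hA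
  set B : Matrix (Fin l) (Fin (t + 1)) F := Matrix.of fun k j => η k ^ (j : ℕ) with hB
  have hSAB : S = A * B := by
    ext i j
    simp only [hSdef, hA, hB, Matrix.mul_apply, Matrix.of_apply, hs, pow_add, mul_assoc]
  have hub : S.rank ≤ l := by
    calc S.rank = (A * B).rank := by rw [hSAB]
      _ ≤ B.rank := Matrix.rank_mul_le_right A B
      _ ≤ Fintype.card (Fin l) := Matrix.rank_le_card_height B
      _ = l := Fintype.card_fin l
  -- lower bound: extract the leading l×l submatrix
  set P : Matrix (Fin l) (Fin t) F :=
    Matrix.of fun k i => if Fin.castLE hlt k = i then (1 : F) else 0 with hP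
  set Q : Matrix (Fin (t + 1)) (Fin l) F :=
    Matrix.of fun j k => if j = Fin.castLE hlt1 k then (1 : F) else 0 with hQ
  set T : Matrix (Fin l) (Fin l) F :=
    Matrix.of fun (i j : Fin l) => s ((i : ℕ) + (j : ℕ)) with hTdef
  have hT : T = P * S * Q := by
    ext i j
    simp [hTdef, hP, hQ, hSdef, Matrix.mul_apply, ite_mul, mul_ite,
      Finset.sum_ite_eq, Finset.sum_ite_eq']
  have hTfac : T = ((Matrix.vandermonde η).transpose * Matrix.diagonal c) * Matrix.vandermonde η := by
    ext i j
    simp only [hTdef, Matrix.mul_apply, Matrix.of_apply, Matrix.vandermonde_apply,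
      Matrix.transpose_apply, Matrix.diagonal_apply, hs, pow_add]
    simp only [mul_ite, mul_zero, Finset.sum_ite_eq', Finset.mem_univ, if_true]
    exact Finset.sum_congr rfl fun k _ => by ring
  have hdet : IsUnit T.det := by
    rw [hTfac, Matrix.det_mul, Matrix.det_mul, Matrix.det_transpose, Matrix.det_diagonal,
      isUnit_iff_ne_zero]
    have hv : (Matrix.vandermonde η).det ≠ 0 := by
      rw [Matrix.det_vandermonde_ne_zero_iff]; exact hηinj
    have hcprod : (∏ k, c k) ≠ 0 := Finset.prod_ne_zero_iff.mpr fun k _ => hc k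
    exact mul_ne_zero (mul_ne_zero hv hcprod) hv
  have hTrank : T.rank = l := by
    rw [Matrix.rank_of_isUnit T ((Matrix.isUnit_iff_isUnit_det T).mpr hdet), Fintype.card_fin]
  have hlb : l ≤ S.rank := by
    calc l = T.rank := hTrank.symm
      _ = (P * S * Q).rank := by rw [hT]
      _ ≤ (P * S).rank := Matrix.rank_mul_le_left (P * S) Q
      _ ≤ S.rank := Matrix.rank_mul_le_right P S
  exact le_antisymm hub hlb
end

section
/- (Forney's formula) Let σ(z) = s_0 + s_1 z + ... + s_{r−1} z^{r−1}, L̃(z) = ∏_{k=1}^l (1 − η_k z), and E(z) = L̃(z)σ(z) mod z^r, with 2l ≤ r. Then for each error position m = m_k, the error value is e_m = −α_m E(1/α_m) / (h_m L̃'(1/α_m)). -/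
/-!
Expanding the syndromes as geometric series, `σ(z) = Σ_k h_k e_k Σ_{j<r} (η_k z)^j`, and each
factor `1 - η_k z` of `L̃` telescopes its own series:
`L̃(z) σ(z) = Σ_k h_k e_k L̃_k(z) (1 - (η_k z)^r)` with `L̃_k = ∏_{i ≠ k} (1 - η_i z)`
(`errorLocator (s.erase k) η`).
Since `deg L̃_k < l ≤ r`, reducing mod `z^r` gives `E(z) = Σ_k h_k e_k L̃_k(z)`.
At `z = η_k⁻¹` every `L̃_i` with `i ≠ k` vanishes, so `E(η_k⁻¹) = h_k e_k L̃_k(η_k⁻¹)`, while the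
product rule gives `L̃'(η_k⁻¹) = -η_k L̃_k(η_k⁻¹)`, which is nonzero because the locators are
distinct.
-/

open Polynomial Finset

namespace Forney

variable {R ι : Type*}

section CommRing

variable [CommRing R]

noncomputable def errorLocator (s : Finset ι) (η : ι → R) : R[X] := ∏ i ∈ s, (1 - C (η i) * X)

variable (s : Finset ι) (η : ι → R)

theorem natDegree_errorLocator_le : (errorLocator s η).natDegree ≤ #s := by
  have hfactor (i : ι) : (1 - C (η i) * X).natDegree ≤ 1 := by compute_degree
  exact (natDegree_prod_le _ _).trans ((sum_le_sum fun i _ => hfactor i).trans (by simp))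

theorem derivative_errorLocator [DecidableEq ι] :
    derivative (errorLocator s η) = -∑ i ∈ s, C (η i) * errorLocator (s.erase i) η := by
  rw [errorLocator, derivative_prod_finset, ← sum_neg_distrib]
  refine sum_congr rfl fun i _ => ?_
  rw [derivative_sub, derivative_one, derivative_C_mul_X, zero_sub, mul_neg, mul_comm,
    errorLocator]

theorem sum_C_syndrome_mul_X_pow (w : ι → R) (r : ℕ) :
    ∑ j ∈ range r, C (∑ i ∈ s, w i * η i ^ j) * X ^ j =
      ∑ i ∈ s, C (w i) * ∑ j ∈ range r, (C (η i) * X) ^ j := by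
  simp only [map_sum, sum_mul, mul_sum, map_mul, map_pow, mul_pow, mul_assoc]
  exact sum_comm

theorem errorLocator_mul_syndromes [DecidableEq ι] (w : ι → R) (r : ℕ) :
    errorLocator s η * ∑ j ∈ range r, C (∑ i ∈ s, w i * η i ^ j) * X ^ j =
      ∑ i ∈ s, C (w i) * errorLocator (s.erase i) η * (1 - (C (η i) * X) ^ r) := by
  rw [sum_C_syndrome_mul_X_pow, mul_sum]
  refine sum_congr rfl fun i hi => ?_
  rw [errorLocator, ← mul_prod_erase s _ hi, ← mul_neg_geom_sum, errorLocator]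
  ring

theorem errorLocator_mul_syndromes_modByMonic [DecidableEq ι] [Nontrivial R] (w : ι → R)
    {r : ℕ} (hr : #s ≤ r) :
    (errorLocator s η * ∑ j ∈ range r, C (∑ i ∈ s, w i * η i ^ j) * X ^ j) %ₘ X ^ r =
      ∑ i ∈ s, C (w i) * errorLocator (s.erase i) η := by
  have hdvd : X ^ r ∣ errorLocator s η * ∑ j ∈ range r, C (∑ i ∈ s, w i * η i ^ j) * X ^ j -
      ∑ i ∈ s, C (w i) * errorLocator (s.erase i) η := by
    rw [errorLocator_mul_syndromes, ← sum_sub_distrib]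
    refine dvd_sum fun i _ => ⟨-(C (w i) * errorLocator (s.erase i) η * C (η i) ^ r), ?_⟩
    ring
  rw [modByMonic_eq_of_dvd_sub (monic_X_pow r) hdvd, modByMonic_eq_self_iff (monic_X_pow r),
    degree_X_pow, ← mem_degreeLT]
  refine sum_mem fun i hi => mem_degreeLT.2 <| degree_le_natDegree.trans_lt ?_
  have hlt : #(s.erase i) < r := (card_erase_lt_of_mem hi).trans_le hr
  exact_mod_cast (natDegree_C_mul_le _ _).trans_lt
    ((natDegree_errorLocator_le _ η).trans_lt hlt)

variable {s η} {k : ι} {x : R}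

theorem eval_errorLocator_eq_zero (hk : k ∈ s) (hx : η k * x = 1) :
    (errorLocator s η).eval x = 0 := by
  rw [errorLocator, eval_prod]
  exact prod_eq_zero hk (by simp [hx])

theorem eval_sum_C_mul_errorLocator_erase [DecidableEq ι] (f : ι → R) (hk : k ∈ s)
    (hx : η k * x = 1) :
    (∑ i ∈ s, C (f i) * errorLocator (s.erase i) η).eval x =
      f k * (errorLocator (s.erase k) η).eval x := by
  rw [eval_finsetSum, sum_eq_single_of_mem k hk, eval_mul, eval_C]
  intro i _ hik
  rw [eval_mul, eval_errorLocator_eq_zero (mem_erase.2 ⟨Ne.symm hik, hk⟩) hx, mul_zero]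

theorem eval_derivative_errorLocator [DecidableEq ι] (hk : k ∈ s) (hx : η k * x = 1) :
    (derivative (errorLocator s η)).eval x = -(η k * (errorLocator (s.erase k) η).eval x) := by
  rw [derivative_errorLocator, eval_neg, eval_sum_C_mul_errorLocator_erase η hk hx]

end CommRing

theorem eval_errorLocator_erase_inv_ne_zero {K : Type*} [Field K] [DecidableEq ι]
    {s : Finset ι} {η : ι → K} (hη : Set.InjOn η s) {k : ι} (hk : k ∈ s) (hηk : η k ≠ 0) :
    (errorLocator (s.erase k) η).eval (η k)⁻¹ ≠ 0 := by
  rw [errorLocator, eval_prod, prod_ne_zero_iff]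
  intro j hj
  obtain ⟨hjk, hjs⟩ := mem_erase.1 hj
  simp only [eval_sub, eval_one, eval_mul, eval_C, eval_X]
  rw [sub_ne_zero, ne_comm, Ne, mul_inv_eq_one₀ hηk]
  exact fun h => hjk (hη hjs hk h)

end Forney

open Forney

open Polynomial in
theorem stmt_14_general {F : Type*} [Field F] (l r : ℕ) (hlr : 2 * l ≤ r)
    (η hm em : Fin l → F) (hη0 : ∀ k, η k ≠ 0) (hηinj : Function.Injective η)
    (hhm : ∀ k, hm k ≠ 0)
    (s : ℕ → F) (hs : ∀ j, s j = ∑ k, hm k * em k * η k ^ j) :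
    ∀ k : Fin l,
      em k = -(η k *
          (((∏ i, (1 - C (η i) * X)) * (∑ j ∈ Finset.range r, C (s j) * X ^ j)) %ₘ
            (X ^ r : F[X])).eval (η k)⁻¹) /
        (hm k * (Polynomial.derivative (∏ i, (1 - C (η i) * X))).eval (η k)⁻¹) := by
  intro k
  have hx : η k * (η k)⁻¹ = 1 := mul_inv_cancel₀ (hη0 k)
  have hlocator : ∏ i, (1 - C (η i) * X) = errorLocator univ η := rfl
  have hcofactor := eval_errorLocator_erase_inv_ne_zero hηinj.injOn (mem_univ k) (hη0 k)
  simp only [hs, hlocator]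
  rw [errorLocator_mul_syndromes_modByMonic _ _ _ (by rw [card_univ, Fintype.card_fin]; omega),
    eval_sum_C_mul_errorLocator_erase _ (mem_univ k) hx,
    eval_derivative_errorLocator (mem_univ k) hx]
  rw [eq_div_iff (by simp [hhm k, hη0 k, hcofactor])]
  ring

open Polynomial in
/-- Forney's formula: with `σ(z) = Σ_{j<r} s_j z^j`, `L̃(z) = ∏ (1 - η_k z)` and
`E(z) = L̃(z)σ(z) mod z^r` (`2l ≤ r`), the error value at position `m = m_k` is
`e_m = -α_m E(1/α_m) / (h_m L̃'(1/α_m))`. -/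
theorem stmt_14 {F : Type*} [Field F] (l r : ℕ) (hlr : 2 * l ≤ r)
    (η hm em : Fin l → F) (hη0 : ∀ k, η k ≠ 0) (hηinj : Function.Injective η)
    (hhm : ∀ k, hm k ≠ 0) (hem : ∀ k, em k ≠ 0)
    (s : ℕ → F) (hs : ∀ j, s j = ∑ k, hm k * em k * η k ^ j) :
    ∀ k : Fin l,
      em k = -(η k *
          (((∏ i, (1 - C (η i) * X)) * (∑ j ∈ Finset.range r, C (s j) * X ^ j)) %ₘ
            (X ^ r : F[X])).eval (η k)⁻¹) /
        (hm k * (Polynomial.derivative (∏ i, (1 - C (η i) * X))).eval (η k)⁻¹) :=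
  stmt_14_general l r hlr η hm em hη0 hηinj hhm s hs
end

section
/- (Alternative Forney formula) With σ̃(z) = s_0 z^{r−1} + s_1 z^{r−2} + ... + s_{r−1}, L(z) = ∏_{k=1}^l (z − η_k), and E*(z) the remainder of L(z)σ̃(z) upon division by z^r, the error value at position m = m_k is e_m = −E*(α_m)/(h_m α_m^r L'(α_m)). -/
open Polynomial in
/-- Alternative Forney formula: with `σ̃(z) = Σ_{j<r} s_j z^{r-1-j}`,
`L(z) = ∏ (z - η_k)` and `E*(z) = L(z)σ̃(z) mod z^r`, the error value at position
`m = m_k` is `e_m = -E*(α_m)/(h_m α_m^r L'(α_m))`. -/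
theorem stmt_15 {F : Type*} [Field F] (l r : ℕ) (hlr : 2 * l ≤ r)
    (η hm em : Fin l → F) (hη0 : ∀ k, η k ≠ 0) (hηinj : Function.Injective η)
    (hhm : ∀ k, hm k ≠ 0) (hem : ∀ k, em k ≠ 0)
    (s : ℕ → F) (hs : ∀ j, s j = ∑ k, hm k * em k * η k ^ j) :
    ∀ k : Fin l,
      em k = -(((∏ i, (X - C (η i))) *
            (∑ j ∈ Finset.range r, C (s j) * X ^ (r - 1 - j)) %ₘ (X ^ r : F[X])).eval (η k)) /
        (hm k * η k ^ r * (Polynomial.derivative (∏ i, (X - C (η i)))).eval (η k)) := by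
  intro k
  classical
  have hl1 : 1 ≤ l := Nat.one_le_iff_ne_zero.mpr fun h => (h ▸ k).elim0
  have hr1 : 1 ≤ r := le_trans (by omega) hlr
  set L : F[X] := ∏ i, (X - C (η i)) with hLdef
  set Lk : Fin l → F[X] := fun k => ∏ i ∈ Finset.univ.erase k, (X - C (η i)) with hLkdef
  have hfac : ∀ k' : Fin l, L = (X - C (η k')) * Lk k' := fun k' =>
    (Finset.mul_prod_erase _ _ (Finset.mem_univ k')).symm
  -- geometric sum identity
  have geom : ∀ a : F, (∑ j ∈ Finset.range r, (C a) ^ j * X ^ (r - 1 - j)) * (X - C a)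
      = X ^ r - C a ^ r := by
    intro a
    rw [← geom_sum₂_mul (X : F[X]) (C a) r]
    congr 1
    rw [← Finset.sum_range_reflect (fun i => (X : F[X]) ^ i * C a ^ (r - 1 - i)) r]
    refine Finset.sum_congr rfl fun j hj => ?_
    have hj' : j ≤ r - 1 := by
      have := Finset.mem_range.mp hj; omega
    rw [Nat.sub_sub_self hj', mul_comm]
  -- the key factorization of L * σ̃
  have key : L * (∑ j ∈ Finset.range r, C (s j) * X ^ (r - 1 - j)) =
      ∑ k', C (hm k' * em k') * ((X ^ r - C (η k' ^ r)) * Lk k') := by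
    have step1 : ∀ j ∈ Finset.range r, L * (C (s j) * X ^ (r - 1 - j)) =
        ∑ k', C (hm k' * em k') * ((C (η k')) ^ j * X ^ (r - 1 - j) * L) := by
      intro j _
      rw [hs j, map_sum, Finset.sum_mul, Finset.mul_sum]
      refine Finset.sum_congr rfl fun k' _ => ?_
      simp only [map_mul, map_pow]
      ring
    rw [Finset.mul_sum, Finset.sum_congr rfl step1, Finset.sum_comm]
    refine Finset.sum_congr rfl fun k' _ => ?_
    rw [← Finset.mul_sum, ← Finset.sum_mul, hfac k', map_pow, ← geom (η k')]
    ring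
  set R : F[X] := ∑ k', C (hm k' * em k' * η k' ^ r) * Lk k' with hRdef
  have key2 : L * (∑ j ∈ Finset.range r, C (s j) * X ^ (r - 1 - j)) =
      (-R) + (X ^ r) * (∑ k', C (hm k' * em k') * Lk k') := by
    rw [key, hRdef, Finset.mul_sum, ← Finset.sum_neg_distrib, ← Finset.sum_add_distrib]
    refine Finset.sum_congr rfl fun k' _ => ?_
    simp only [map_mul, map_pow]
    ring
  -- degree bound for R
  have hdegLk : ∀ k' : Fin l, (Lk k').degree = ((l - 1 : ℕ) : WithBot ℕ) := by
    intro k'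
    have : Lk k' = Lagrange.nodal (Finset.univ.erase k') η := rfl
    rw [this, Lagrange.degree_nodal]
    simp [Finset.card_erase_of_mem]
  have hdegR : R.degree < (r : WithBot ℕ) := by
    refine lt_of_le_of_lt (Polynomial.degree_sum_le _ _) ?_
    rw [Finset.sup_lt_iff (by exact_mod_cast WithBot.bot_lt_coe r)]
    intro k' _
    refine lt_of_le_of_lt (Polynomial.degree_mul_le _ _) ?_
    refine lt_of_le_of_lt (add_le_add Polynomial.degree_C_le (le_of_eq (hdegLk k'))) ?_
    rw [zero_add]
    exact_mod_cast (by omega : l - 1 < r)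
  -- compute the remainder
  have hmonic : (X ^ r : F[X]).Monic := monic_X_pow r
  have hmod : L * (∑ j ∈ Finset.range r, C (s j) * X ^ (r - 1 - j)) %ₘ (X ^ r : F[X]) = -R := by
    rw [key2, Polynomial.add_modByMonic, Polynomial.self_mul_modByMonic hmonic, add_zero,
      Polynomial.neg_modByMonic, (Polynomial.modByMonic_eq_self_iff hmonic).mpr]
    rwa [Polynomial.degree_X_pow]
  -- evaluate R at η k
  have hevalLkk : ∀ k' : Fin l, k' ≠ k → (Lk k').eval (η k) = 0 := by
    intro k' hk'
    rw [hLkdef]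
    simp only [Polynomial.eval_prod, Polynomial.eval_sub, Polynomial.eval_X, Polynomial.eval_C]
    exact Finset.prod_eq_zero (Finset.mem_erase.mpr ⟨Ne.symm hk', Finset.mem_univ k⟩) (by simp)
  set P : F := ∏ i ∈ Finset.univ.erase k, (η k - η i) with hPdef
  have hevalLk : (Lk k).eval (η k) = P := by
    rw [hLkdef, hPdef]
    simp [Polynomial.eval_prod]
  have hevalR : R.eval (η k) = hm k * em k * η k ^ r * P := by
    rw [hRdef, Polynomial.eval_finset_sum]
    rw [Finset.sum_eq_single k]
    · simp [hevalLk]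
    · intro k' _ hk'
      simp [hevalLkk k' hk']
    · simp
  -- derivative evaluation
  have hderiv : (Polynomial.derivative L).eval (η k) = P := by
    have hL : L = Lagrange.nodal Finset.univ η := rfl
    rw [hL, Lagrange.eval_nodal_derivative_eval_node_eq (Finset.mem_univ k),
      Lagrange.eval_nodal]
  have hP : P ≠ 0 := by
    rw [hPdef]
    refine Finset.prod_ne_zero_iff.mpr fun i hi => ?_
    have : i ≠ k := (Finset.mem_erase.mp hi).1
    exact sub_ne_zero.mpr fun h => this (hηinj h).symm
  have hden : hm k * η k ^ r * P ≠ 0 :=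
    mul_ne_zero (mul_ne_zero (hhm k) (pow_ne_zero _ (hη0 k))) hP
  rw [hmod, hderiv, Polynomial.eval_neg, hevalR, neg_neg, eq_div_iff hden]
  ring
end

section
/- If α is a primitive element of the finite field K of order q and n = q − 1, then BCH(α, n − k + 1) = RS([1, α, ..., α^{n−1}], k). -/
open Finset

/-- Geometric sum of powers of an element of exact order `n`. -/
lemma aux_geom_stmt19 {K : Type*} [Field K] {α : K} {n : ℕ}
    (hprim : orderOf α = n) (m : ℕ) :
    ∑ jj : Fin n, α ^ ((jj : ℕ) * m) = if n ∣ m then (n : K) else 0 := by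
  have hcast : ∑ jj : Fin n, α ^ ((jj : ℕ) * m) = ∑ jj ∈ range n, (α ^ m) ^ jj := by
    rw [Fin.sum_univ_eq_sum_range (fun jj => α ^ (jj * m))]
    exact Finset.sum_congr rfl (fun i _ => by rw [← pow_mul, mul_comm])
  rw [hcast]
  by_cases h : n ∣ m
  · have h1 : α ^ m = 1 := orderOf_dvd_iff_pow_eq_one.mp (hprim ▸ h)
    simp [h1, h]
  · have h1 : α ^ m ≠ 1 := fun hc => h (hprim ▸ orderOf_dvd_iff_pow_eq_one.mpr hc)
    rw [geom_sum_eq h1, if_neg h]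
    have h2 : (α ^ m) ^ n = 1 := by
      rw [← pow_mul, mul_comm, pow_mul, ← hprim, pow_orderOf_eq_one, one_pow]
    simp [h2]

/-- If `α` is a primitive element of the finite field `K` of order `q` and `n = q - 1`,
then the strict BCH code `BCH(α, n-k+1)` equals the Reed–Solomon code
`RS([1, α, ..., α^{n-1}], k)`. -/
theorem stmt_19 {K : Type*} [Field K] [Fintype K] (n k : ℕ)
    (hn : n = Fintype.card K - 1) (hk : k ≤ n)
    (α : K) (hprim : orderOf α = n) :
    ∀ x : Fin n → K,
      (∀ j : Fin (n - k), ∑ i, x i * α ^ ((i : ℕ) * ((j : ℕ) + 1)) = 0) ↔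
      x ∈ Submodule.span K
        (Set.range fun i : Fin k => fun jj : Fin n => (α ^ (jj : ℕ)) ^ (i : ℕ)) := by
  intro x
  have hcard : 2 ≤ Fintype.card K := Fintype.one_lt_card
  have hn0 : 0 < n := by omega
  have hαn : α ^ n = 1 := by rw [← hprim]; exact pow_orderOf_eq_one α
  have hα0 : α ≠ 0 := by
    intro h; rw [h, zero_pow hn0.ne'] at hαn; exact zero_ne_one hαn
  have hnK : (n : K) = -1 := by
    have h0 : ((Fintype.card K : ℕ) : K) = 0 := FiniteField.cast_card_eq_zero K
    rw [hn, Nat.cast_sub (by omega)]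
    simp [h0]
  have hdvd : ∀ m : ℕ, 0 < m → m < n → ¬ n ∣ m := fun m h1 h2 hd =>
    absurd (Nat.le_of_dvd h1 hd) (by omega)
  constructor
  · -- BCH → RS
    intro hB
    -- key vanishing lemma for "high-frequency" inverse-transform coefficients
    have hA : ∀ i : ℕ, k ≤ i → i < n →
        ∑ jj : Fin n, x jj * α ^ ((n - 1) * i * (jj : ℕ)) = 0 := by
      intro i hki hin
      have hne : α ^ ((n - 1) * i) = α ^ (n - i) := by
        have e1 : α ^ ((n - 1) * i) * α ^ i = 1 := by
          rw [← pow_add]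
          have e : (n - 1) * i + i = n * i := by
            rw [Nat.sub_one_mul, Nat.sub_add_cancel (Nat.le_mul_of_pos_left i hn0)]
          rw [e, pow_mul, hαn, one_pow]
        have e2 : α ^ (n - i) * α ^ i = 1 := by
          rw [← pow_add]
          have e : n - i + i = n := by omega
          rw [e, hαn]
        exact mul_right_cancel₀ (pow_ne_zero i hα0) (e1.trans e2.symm)
      have hj : n - i - 1 < n - k := by omega
      have hBj := hB ⟨n - i - 1, hj⟩
      simp only at hBj
      have hval : ((⟨n - i - 1, hj⟩ : Fin (n - k)) : ℕ) + 1 = n - i := by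
        simp only [Fin.val_mk]; omega
      rw [hval] at hBj
      calc ∑ jj : Fin n, x jj * α ^ ((n - 1) * i * (jj : ℕ))
          = ∑ jj : Fin n, x jj * α ^ ((jj : ℕ) * (n - i)) := by
            refine Finset.sum_congr rfl fun jj _ => ?_
            rw [pow_mul, hne, ← pow_mul, Nat.mul_comm (n - i) (jj : ℕ)]
        _ = 0 := hBj
    -- the divisibility criterion for the inversion formula
    have hiff : ∀ (m jj : Fin n), (n ∣ ((n - 1) * (jj : ℕ) + (m : ℕ))) ↔ jj = m := by
      intro m jj
      rw [← ZMod.natCast_eq_zero_iff]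
      have hc : (((n - 1) * (jj : ℕ) + (m : ℕ) : ℕ) : ZMod n)
          = (m : ℕ) - (jj : ℕ) := by
        push_cast [Nat.cast_sub (by omega : 1 ≤ n)]
        simp [ZMod.natCast_self]
        ring
      rw [hc, sub_eq_zero]
      rw [ZMod.natCast_eq_natCast_iff]
      constructor
      · intro h
        have := h.symm
        unfold Nat.ModEq at this
        rw [Nat.mod_eq_of_lt jj.isLt, Nat.mod_eq_of_lt m.isLt] at this
        exact Fin.ext this
      · intro h; rw [h]
    -- the explicit linear combination
    set c : Fin k → K := fun i => -(∑ jj : Fin n, x jj * α ^ ((n - 1) * (i : ℕ) * (jj : ℕ)))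
      with hc
    have key : x = ∑ i : Fin k, c i • (fun jj : Fin n => (α ^ (jj : ℕ)) ^ (i : ℕ)) := by
      funext m
      have hrhs : (∑ i : Fin k, c i • (fun jj : Fin n => (α ^ (jj : ℕ)) ^ (i : ℕ))) m
          = ∑ i ∈ range k,
              (-(∑ jj : Fin n, x jj * α ^ ((n - 1) * i * (jj : ℕ))) * α ^ ((m : ℕ) * i)) := by
        rw [Finset.sum_apply]
        rw [← Fin.sum_univ_eq_sum_range
          (fun i => -(∑ jj : Fin n, x jj * α ^ ((n - 1) * i * (jj : ℕ))) * α ^ ((m : ℕ) * i)) k]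
        refine Finset.sum_congr rfl fun i _ => ?_
        simp only [Pi.smul_apply, smul_eq_mul, hc]
        rw [← pow_mul]
      rw [hrhs]
      set f : ℕ → K := fun i =>
        -(∑ jj : Fin n, x jj * α ^ ((n - 1) * i * (jj : ℕ))) * α ^ ((m : ℕ) * i) with hf
      have hsplit : ∑ i ∈ range k, f i = ∑ i ∈ range n, f i := by
        rw [← Finset.sum_range_add_sum_Ico f hk]
        have hz : ∑ i ∈ Finset.Ico k n, f i = 0 := by
          refine Finset.sum_eq_zero fun i hi => ?_
          rw [Finset.mem_Ico] at hi
          simp only [hf]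
          rw [hA i hi.1 hi.2]
          ring
        rw [hz, add_zero]
      rw [hsplit]
      symm
      have hstep : ∀ i : ℕ, f i = -∑ jj : Fin n, x jj * α ^ (i * ((n - 1) * (jj : ℕ) + (m : ℕ))) := by
        intro i
        simp only [hf, neg_mul, Finset.sum_mul, neg_inj]
        refine Finset.sum_congr rfl fun jj _ => ?_
        rw [mul_assoc, ← pow_add]
        congr 2
        ring
      calc ∑ i ∈ range n, f i
          = -∑ i ∈ range n, ∑ jj : Fin n, x jj * α ^ (i * ((n - 1) * (jj : ℕ) + (m : ℕ))) := by
            rw [← Finset.sum_neg_distrib]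
            exact Finset.sum_congr rfl fun i _ => hstep i
        _ = -∑ jj : Fin n, x jj * ∑ i ∈ range n, α ^ (i * ((n - 1) * (jj : ℕ) + (m : ℕ))) := by
            rw [Finset.sum_comm]
            congr 1
            exact Finset.sum_congr rfl fun jj _ => (Finset.mul_sum _ _ _).symm
        _ = -∑ jj : Fin n, x jj * (if n ∣ ((n - 1) * (jj : ℕ) + (m : ℕ)) then (n : K) else 0) := by
            congr 1
            refine Finset.sum_congr rfl fun jj _ => ?_
            congr 1
            rw [← Fin.sum_univ_eq_sum_range (fun i => α ^ (i * ((n - 1) * (jj : ℕ) + (m : ℕ)))) n]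
            exact aux_geom_stmt19 hprim _
        _ = -∑ jj : Fin n, (if jj = m then x jj * (n : K) else 0) := by
            congr 1
            refine Finset.sum_congr rfl fun jj _ => ?_
            rw [mul_ite, mul_zero]
            congr 1
            simp [hiff m jj]
        _ = x m := by
            rw [Finset.sum_ite_eq' Finset.univ m (fun jj => x jj * (n : K))]
            simp [hnK]
    rw [key]
    exact Submodule.sum_mem _ fun i _ =>
      Submodule.smul_mem _ _ (Submodule.subset_span ⟨i, rfl⟩)
  · -- RS → BCH
    intro hS j
    induction hS using Submodule.span_induction with
    | mem y hy =>
        obtain ⟨i, rfl⟩ := hy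
        have he : ∀ jj : Fin n,
            ((α ^ (jj : ℕ)) ^ (i : ℕ)) * α ^ ((jj : ℕ) * ((j : ℕ) + 1))
              = α ^ ((jj : ℕ) * ((i : ℕ) + (j : ℕ) + 1)) := by
          intro jj
          rw [← pow_mul, ← pow_add]
          congr 1
          ring
        rw [Finset.sum_congr rfl (fun jj _ => he jj), aux_geom_stmt19 hprim]
        rw [if_neg]
        refine hdvd _ (by omega) ?_
        have h1 : (i : ℕ) < k := i.isLt
        have h2 : (j : ℕ) < n - k := j.isLt
        omega
    | zero => simp
    | add a b _ _ ha hb => simp [add_mul, Finset.sum_add_distrib, ha, hb]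
    | smul r a _ ha =>
        simp only [Pi.smul_apply, smul_eq_mul, mul_assoc, ← Finset.mul_sum, ha, mul_zero]
end
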